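/- arXiv:2307.07465 — 5 statements merged into one kernel-verified Lean document; each statement's English description precedes it below -/
import Mathlib

section
/- Let λ be a Young diagram, and suppose μ ⋖ λ is obtained from λ by removing a box. Then ∑_{ν : λ ⋖ ν} p↑(λ,ν) / (c(ν/λ) - c(λ/μ))² = 1 / (|λ| · p↓(λ,μ)), where the sum is over Young diagrams ν obtained from λ by adding a box, c denotes the content of the added/removed box, p↑ is the transition probability and p↓ is the cotransition probability of λ. -/
open Finset

namespace YG

/-- `Covers μ l` : the Young diagram `l` is obtained from `μ` by adding one box. -/
def Covers (μ l : YoungDiagram) : Prop := μ ≤ l ∧ l.card = μ.card + 1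

/-- The content `j - i` of a cell `(i, j)`. -/
def content (c : ℕ × ℕ) : ℤ := (c.2 : ℤ) - (c.1 : ℤ)

/-- The content of the unique box of `l \ μ` when `Covers μ l`. -/
def addedContent (μ l : YoungDiagram) : ℤ := ∑ c ∈ l.cells \ μ.cells, content c

/-- The removable corner cells of a Young diagram; their contents are the local
maxima `y_i` of the profile. -/
def removableCells (l : YoungDiagram) : Finset (ℕ × ℕ) :=
  l.cells.filter (fun c => (c.1, c.2 + 1) ∉ l ∧ (c.1 + 1, c.2) ∉ l)

/-- The addable cells of a Young diagram; their contents are the local minima `x_i`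
of the profile. -/
def addableCells (l : YoungDiagram) : Finset (ℕ × ℕ) :=
  ((Finset.range (l.card + 1)) ×ˢ (Finset.range (l.card + 1))).filter
    (fun c => c ∉ l ∧ (c.1 = 0 ∨ (c.1 - 1, c.2) ∈ l) ∧ (c.2 = 0 ∨ (c.1, c.2 - 1) ∈ l))

/-- The transition probability `p↑(l, ·)` at an addable content `x = x_i`:
`∏_j (x_i - y_j) / ∏_{j ≠ i} (x_i - x_j)`. -/
noncomputable def pUpAt (l : YoungDiagram) (x : ℤ) : ℝ :=
  (∏ r ∈ removableCells l, ((x : ℝ) - (content r : ℝ))) /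
    (∏ a ∈ (addableCells l).filter (fun a => content a ≠ x), ((x : ℝ) - (content a : ℝ)))

/-- The cotransition probability `p↓(l, ·)` at a removable content `y = y_i`:
`-(1/|l|) ∏_j (y_i - x_j) / ∏_{j ≠ i} (y_i - y_j)`. -/
noncomputable def pDownAt (l : YoungDiagram) (y : ℤ) : ℝ :=
  -(1 / (l.card : ℝ)) *
    ((∏ a ∈ addableCells l, ((y : ℝ) - (content a : ℝ))) /
      (∏ r ∈ (removableCells l).filter (fun r => content r ≠ y), ((y : ℝ) - (content r : ℝ))))

/-- `p↑(μ, l)` for `μ ⋖ l`. -/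
noncomputable def pUp (μ l : YoungDiagram) : ℝ := pUpAt μ (addedContent μ l)

/-- `p↓(l, μ)` for `μ ⋖ l`. -/
noncomputable def pDown (l μ : YoungDiagram) : ℝ := pDownAt l (addedContent μ l)

/-- The Plancherel harmonic function
`f_Pl(l) = (1/|l|!) ∏_{(i,j) ∈ l} (l_i + l'_j - i - j + 1)` (hook products, written with
0-based indices). -/
noncomputable def fPl (l : YoungDiagram) : ℝ :=
  (∏ c ∈ l.cells, ((l.rowLen c.1 : ℝ) + (l.colLen c.2 : ℝ) - (c.1 : ℝ) - (c.2 : ℝ) - 1)) /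
    (Nat.factorial l.card : ℝ)

lemma rowLen_le_card (l : YoungDiagram) (i : ℕ) : l.rowLen i ≤ l.card := by
  rw [l.rowLen_eq_card]
  exact Finset.card_le_card (Finset.filter_subset _ _)

lemma colLen_le_card (l : YoungDiagram) (j : ℕ) : l.colLen j ≤ l.card := by
  rw [l.colLen_eq_card]
  exact Finset.card_le_card (Finset.filter_subset _ _)

def ARows (l : YoungDiagram) : Finset ℕ :=
  (Finset.range (l.card + 1)).filter (fun i => i = 0 ∨ l.rowLen i < l.rowLen (i - 1))

def RRows (l : YoungDiagram) : Finset ℕ :=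
  (Finset.range (l.card + 1)).filter (fun i => l.rowLen (i + 1) < l.rowLen i)

lemma mem_ARows {l : YoungDiagram} {i : ℕ} :
    i ∈ ARows l ↔ (i = 0 ∨ l.rowLen i < l.rowLen (i - 1)) := by
  rw [ARows, mem_filter, mem_range]
  refine ⟨And.right, fun hcond => ⟨?_, hcond⟩⟩
  rcases hcond with h0 | hlt
  · omega
  · rcases Nat.eq_zero_or_pos i with h0 | hpos
    · omega
    · have hmem : (i - 1, 0) ∈ l := YoungDiagram.mem_iff_lt_rowLen.mpr (by omega)
      have h2 := YoungDiagram.mem_iff_lt_colLen.mp hmem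
      have h3 := colLen_le_card l 0
      omega

lemma mem_RRows {l : YoungDiagram} {i : ℕ} :
    i ∈ RRows l ↔ l.rowLen (i + 1) < l.rowLen i := by
  rw [RRows, mem_filter, mem_range]
  refine ⟨And.right, fun hcond => ⟨?_, hcond⟩⟩
  have hmem : (i, 0) ∈ l := YoungDiagram.mem_iff_lt_rowLen.mpr (by omega)
  have h2 := YoungDiagram.mem_iff_lt_colLen.mp hmem
  have h3 := colLen_le_card l 0
  omega

lemma addable_eq (l : YoungDiagram) :
    addableCells l = (ARows l).image (fun i => (i, l.rowLen i)) := by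
  ext ⟨i, j⟩
  simp only [addableCells, mem_filter, mem_product, mem_range, mem_image, Prod.mk.injEq]
  constructor
  · rintro ⟨⟨hi, hj⟩, hnot, h1, h2⟩
    have hge : l.rowLen i ≤ j := by
      by_contra hlt
      exact hnot (YoungDiagram.mem_iff_lt_rowLen.mpr (by omega))
    have hjr : j = l.rowLen i := by
      rcases h2 with h0 | hmem
      · omega
      · have := YoungDiagram.mem_iff_lt_rowLen.mp hmem; omega
    refine ⟨i, ?_, rfl, hjr.symm⟩
    rw [mem_ARows]
    rcases h1 with h0 | hmem
    · exact Or.inl h0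
    · exact Or.inr (by have := YoungDiagram.mem_iff_lt_rowLen.mp hmem; omega)
  · rintro ⟨i', hi', rfl, rfl⟩
    have hcond := mem_ARows.mp hi'
    have hib : i' < l.card + 1 := mem_range.mp (mem_filter.mp hi').1
    have hrb : l.rowLen i' ≤ l.card := le_trans (l.rowLen_anti 0 i' (Nat.zero_le _)) (rowLen_le_card l 0)
    refine ⟨⟨hib, by omega⟩, ?_, ?_, ?_⟩
    · rw [YoungDiagram.mem_iff_lt_rowLen]; omega
    · rcases hcond with h0 | hlt
      · exact Or.inl h0
      · exact Or.inr (YoungDiagram.mem_iff_lt_rowLen.mpr hlt)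
    · rcases Nat.eq_zero_or_pos (l.rowLen i') with h0 | hpos
      · exact Or.inl h0
      · exact Or.inr (YoungDiagram.mem_iff_lt_rowLen.mpr (by omega))

lemma removable_eq (l : YoungDiagram) :
    removableCells l = (RRows l).image (fun i => (i, l.rowLen i - 1)) := by
  ext ⟨i, j⟩
  simp only [removableCells, mem_filter, YoungDiagram.mem_cells, mem_image, Prod.mk.injEq]
  constructor
  · rintro ⟨hmem, hnotr, hnotd⟩
    have h1 := YoungDiagram.mem_iff_lt_rowLen.mp hmem
    have h2 : ¬ (j + 1 < l.rowLen i) := fun hc => hnotr (YoungDiagram.mem_iff_lt_rowLen.mpr hc)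
    have h3 : ¬ (j < l.rowLen (i + 1)) := fun hc => hnotd (YoungDiagram.mem_iff_lt_rowLen.mpr hc)
    exact ⟨i, mem_RRows.mpr (by omega), rfl, by omega⟩
  · rintro ⟨i', hi', rfl, rfl⟩
    have hcond := mem_RRows.mp hi'
    refine ⟨YoungDiagram.mem_iff_lt_rowLen.mpr (by omega), ?_, ?_⟩
    · rw [YoungDiagram.mem_iff_lt_rowLen]; omega
    · rw [YoungDiagram.mem_iff_lt_rowLen]; omega

lemma ARows_eq_insert (l : YoungDiagram) :
    ARows l = insert 0 ((RRows l).image (· + 1)) := by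
  ext i
  simp only [mem_insert, mem_image, mem_ARows, mem_RRows]
  constructor
  · rintro (h0 | hlt)
    · exact Or.inl h0
    · rcases Nat.eq_zero_or_pos i with h0 | hpos
      · exact Or.inl h0
      · refine Or.inr ⟨i - 1, ?_, by omega⟩
        have he : i - 1 + 1 = i := by omega
        rw [he]; exact hlt
  · rintro (h0 | ⟨i', hi', rfl⟩)
    · exact Or.inl h0
    · exact Or.inr (by simpa using hi')

lemma card_addable (l : YoungDiagram) :
    (addableCells l).card = (removableCells l).card + 1 := by
  rw [addable_eq, removable_eq,
    Finset.card_image_of_injective _ (fun a b hab => by injection hab),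
    Finset.card_image_of_injective _ (fun a b hab => by injection hab),
    ARows_eq_insert, Finset.card_insert_of_notMem (by simp),
    Finset.card_image_of_injective _ (fun a b hab => by omega)]

lemma content_injOn_addable (l : YoungDiagram) :
    ∀ a ∈ addableCells l, ∀ b ∈ addableCells l, content a = content b → a = b := by
  rw [addable_eq]
  intro a ha b hb hab
  simp only [mem_image] at ha hb
  obtain ⟨i, hi, rfl⟩ := ha
  obtain ⟨i', hi', rfl⟩ := hb
  simp only [content] at hab
  have : i = i' := by
    rcases Nat.lt_trichotomy i i' with hlt | heq | hgt
    · have := l.rowLen_anti i i' (le_of_lt hlt); omega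
    · exact heq
    · have := l.rowLen_anti i' i (le_of_lt hgt); omega
  subst this; rfl

lemma content_injOn_removable (l : YoungDiagram) :
    ∀ a ∈ removableCells l, ∀ b ∈ removableCells l, content a = content b → a = b := by
  rw [removable_eq]
  intro a ha b hb hab
  simp only [mem_image] at ha hb
  obtain ⟨i, hi, rfl⟩ := ha
  obtain ⟨i', hi', rfl⟩ := hb
  have h1 := mem_RRows.mp hi
  have h2 := mem_RRows.mp hi'
  simp only [content] at hab
  have : i = i' := by
    rcases Nat.lt_trichotomy i i' with hlt | heq | hgt
    · have := l.rowLen_anti i i' (le_of_lt hlt); omega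
    · exact heq
    · have := l.rowLen_anti i' i (le_of_lt hgt); omega
  subst this; rfl

lemma content_disjoint (l : YoungDiagram) :
    ∀ a ∈ addableCells l, ∀ r ∈ removableCells l, content a ≠ content r := by
  rw [addable_eq, removable_eq]
  intro a ha r hr
  simp only [mem_image] at ha hr
  obtain ⟨i, hi, rfl⟩ := ha
  obtain ⟨i', hi', rfl⟩ := hr
  have h2 := mem_RRows.mp hi'
  simp only [content]
  rcases le_or_gt i i' with hle | hgt
  · have := l.rowLen_anti i i' hle; omega
  · have := l.rowLen_anti (i' + 1) i (by omega); omega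

lemma cover_cell {μ l : YoungDiagram} (h : Covers μ l) :
    ∃ c ∈ removableCells l, addedContent μ l = content c := by
  have hsub : μ.cells ⊆ l.cells := YoungDiagram.cells_subset_iff.mpr h.1
  have hcard : (l.cells \ μ.cells).card = 1 := by
    rw [Finset.card_sdiff_of_subset hsub]
    have := h.2
    simp only [YoungDiagram.card] at this ⊢
    omega
  obtain ⟨c, hc⟩ := Finset.card_eq_one.mp hcard
  have hcmem : c ∈ l.cells ∧ c ∉ μ.cells := by
    have : c ∈ l.cells \ μ.cells := hc ▸ Finset.mem_singleton_self c
    exact Finset.mem_sdiff.mp this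
  refine ⟨c, ?_, ?_⟩
  · rw [removableCells, mem_filter]
    refine ⟨hcmem.1, ?_, ?_⟩
    · intro hmem
      by_cases hμ : (c.1, c.2 + 1) ∈ μ.cells
      · have : (c.1, c.2) ∈ μ := μ.up_left_mem le_rfl (Nat.le_succ _) ((YoungDiagram.mem_cells _).mp hμ)
        exact hcmem.2 ((YoungDiagram.mem_cells _).mpr (by simpa using this))
      · have : (c.1, c.2 + 1) ∈ l.cells \ μ.cells :=
          Finset.mem_sdiff.mpr ⟨(YoungDiagram.mem_cells _).mpr hmem, hμ⟩
        rw [hc, Finset.mem_singleton] at this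
        have := congrArg Prod.snd this
        simp at this
    · intro hmem
      by_cases hμ : (c.1 + 1, c.2) ∈ μ.cells
      · have : (c.1, c.2) ∈ μ := μ.up_left_mem (Nat.le_succ _) le_rfl ((YoungDiagram.mem_cells _).mp hμ)
        exact hcmem.2 ((YoungDiagram.mem_cells _).mpr (by simpa using this))
      · have : (c.1 + 1, c.2) ∈ l.cells \ μ.cells :=
          Finset.mem_sdiff.mpr ⟨(YoungDiagram.mem_cells _).mpr hmem, hμ⟩
        rw [hc, Finset.mem_singleton] at this
        have := congrArg Prod.fst this
        simp at this
  · rw [addedContent, hc, Finset.sum_singleton]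

end YG

open YG Finset

lemma alg {a A B C : ℝ} (ha : a ≠ 0) (hB : B ≠ 0) (hC : C ≠ 0) :
    (a * A) / B / a ^ 2 = -((A * (B⁻¹ * C)) / (-a * C)) := by
  field_simp

open Polynomial in
lemma key {ι : Type*} [DecidableEq ι] (S T : Finset ι) (v w : ι → ℝ)
    (hv : Set.InjOn v S) (hd : ∀ x ∈ S, ∀ t ∈ T, v x ≠ w t)
    (hcard : S.card = T.card + 1) {c : ι} (hc : c ∈ T) :
    ∑ x ∈ S, (∏ t ∈ T, (v x - w t)) / (∏ x' ∈ S.erase x, (v x - v x')) / ((v x - w c) ^ 2)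
      = -((∏ t ∈ T.erase c, (w c - w t)) / ∏ x ∈ S, (w c - v x)) := by
  set P : Polynomial ℝ := Lagrange.nodal (T.erase c) w with hP
  have hdeg : P.degree < S.card := by
    rw [hP, Lagrange.degree_nodal]
    exact_mod_cast (by rw [card_erase_of_mem hc]; omega : (T.erase c).card < S.card)
  have hinterp := Lagrange.eq_interpolate (v := v) (s := S) hv hdeg
  have hev := congrArg (Polynomial.eval (w c)) hinterp
  rw [Lagrange.interpolate_apply] at hev
  simp only [eval_finset_sum, eval_mul, eval_C] at hev
  have hevP : ∀ z : ℝ, P.eval z = ∏ t ∈ T.erase c, (z - w t) := fun z => by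
    rw [hP, Lagrange.eval_nodal]
  have hevB : ∀ x ∈ S, Polynomial.eval (w c) (Lagrange.basis S v x)
      = ∏ x' ∈ S.erase x, ((v x - v x')⁻¹ * (w c - v x')) := by
    intro x hx
    simp [Lagrange.basis, Lagrange.basisDivisor, Polynomial.eval_prod]
  rw [hevP] at hev
  have hev2 : (∏ t ∈ T.erase c, (w c - w t))
      = ∑ x ∈ S, (∏ t ∈ T.erase c, (v x - w t)) *
          ∏ x' ∈ S.erase x, ((v x - v x')⁻¹ * (w c - v x')) := by
    rw [hev]
    exact Finset.sum_congr rfl fun x hx => by rw [hevP, hevB x hx]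
  -- nonvanishing
  have hSne : (∏ x ∈ S, (w c - v x)) ≠ 0 := by
    refine Finset.prod_ne_zero_iff.mpr fun x hx => sub_ne_zero_of_ne ?_
    exact fun hcontra => hd x hx c hc hcontra.symm
  -- termwise
  have hterm : ∀ x ∈ S,
      (∏ t ∈ T, (v x - w t)) / (∏ x' ∈ S.erase x, (v x - v x')) / ((v x - w c) ^ 2)
      = -(((∏ t ∈ T.erase c, (v x - w t)) *
          ∏ x' ∈ S.erase x, ((v x - v x')⁻¹ * (w c - v x'))) / ∏ x'' ∈ S, (w c - v x'')) := by
    intro x hx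
    have hxc : v x - w c ≠ 0 := sub_ne_zero_of_ne (hd x hx c hc)
    have hprodSe : (∏ x' ∈ S.erase x, (v x - v x')) ≠ 0 := by
      refine Finset.prod_ne_zero_iff.mpr fun x' hx' => sub_ne_zero_of_ne ?_
      exact fun hcontra => (Finset.mem_erase.mp hx').1.symm
        (hv hx (Finset.mem_of_mem_erase hx') hcontra)
    have hTsplit : (∏ t ∈ T, (v x - w t)) = (v x - w c) * ∏ t ∈ T.erase c, (v x - w t) :=
      (Finset.mul_prod_erase T _ hc).symm
    have hSsplit : (∏ x'' ∈ S, (w c - v x'')) = (w c - v x) * ∏ x'' ∈ S.erase x, (w c - v x'') :=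
      (Finset.mul_prod_erase S _ hx).symm
    have hprodC : (∏ x' ∈ S.erase x, (w c - v x')) ≠ 0 := by
      refine Finset.prod_ne_zero_iff.mpr fun x' hx' => sub_ne_zero_of_ne ?_
      exact fun hcontra => hd x' (Finset.mem_of_mem_erase hx') c hc hcontra.symm
    rw [hTsplit, hSsplit, Finset.prod_mul_distrib, Finset.prod_inv_distrib,
      show w c - v x = -(v x - w c) by ring]
    exact alg hxc hprodSe hprodC
  rw [Finset.sum_congr rfl hterm, Finset.sum_neg_distrib, ← Finset.sum_div, ← hev2]


/-- Second-order pole evaluation of the transition measure (Lemma 4.2):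
for `μ ⋖ λ`, `∑_{ν : λ ⋖ ν} p↑(λ,ν)/(c(ν/λ) - c(λ/μ))² = 1/(|λ|·p↓(λ,μ))`.
The sum over covers `ν` of `λ` is written as a sum over the addable cells of `λ`. -/
theorem stmt4 (l μ : YoungDiagram) (h : Covers μ l) :
    ∑ a ∈ addableCells l,
        pUpAt l (content a) / (((content a : ℝ) - (addedContent μ l : ℝ)) ^ 2) =
      1 / ((l.card : ℝ) * pDown l μ) := by
  classical
  obtain ⟨c, hcrem, hadded⟩ := cover_cell h
  have hn : (l.card : ℝ) ≠ 0 := Nat.cast_ne_zero.mpr (by have := h.2; omega)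
  have hv : Set.InjOn (fun a : ℕ × ℕ => (content a : ℝ)) (addableCells l) := by
    intro a ha b hb hab
    have hab' : ((content a : ℤ) : ℝ) = ((content b : ℤ) : ℝ) := hab
    exact content_injOn_addable l a ha b hb (by exact_mod_cast hab')
  have hd : ∀ x ∈ addableCells l, ∀ t ∈ removableCells l,
      (fun a : ℕ × ℕ => (content a : ℝ)) x ≠ (fun a : ℕ × ℕ => (content a : ℝ)) t := by
    intro x hx t ht hc
    have hc' : ((content x : ℤ) : ℝ) = ((content t : ℤ) : ℝ) := hc
    exact content_disjoint l x hx t ht (by exact_mod_cast hc')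
  have hfiltA : ∀ a ∈ addableCells l,
      (addableCells l).filter (fun a' => content a' ≠ content a) = (addableCells l).erase a := by
    intro a ha
    ext b
    simp only [mem_filter, mem_erase]
    constructor
    · rintro ⟨hb, hne⟩
      exact ⟨fun heq => hne (by rw [heq]), hb⟩
    · rintro ⟨hne, hb⟩
      exact ⟨hb, fun heq => hne (content_injOn_addable l b hb a ha heq)⟩
  have hfiltR : (removableCells l).filter (fun r => content r ≠ addedContent μ l)
      = (removableCells l).erase c := by
    ext b
    simp only [mem_filter, mem_erase, hadded]
    constructor
    · rintro ⟨hb, hne⟩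
      exact ⟨fun heq => hne (by rw [heq]), hb⟩
    · rintro ⟨hne, hb⟩
      exact ⟨hb, fun heq => hne (content_injOn_removable l b hb c hcrem heq)⟩
  have hkey := key (addableCells l) (removableCells l)
      (fun a => (content a : ℝ)) (fun a => (content a : ℝ)) hv hd (card_addable l) hcrem
  have hcast : ((addedContent μ l : ℤ) : ℝ) = ((content c : ℤ) : ℝ) := by
    exact_mod_cast congrArg (fun z : ℤ => (z : ℝ)) hadded
  have hLHS : ∑ a ∈ addableCells l,
      pUpAt l (content a) / (((content a : ℝ) - (addedContent μ l : ℝ)) ^ 2)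
      = ∑ a ∈ addableCells l, (∏ t ∈ removableCells l, ((content a : ℝ) - (content t : ℝ))) /
          (∏ a' ∈ (addableCells l).erase a, ((content a : ℝ) - (content a' : ℝ))) /
          (((content a : ℝ) - (content c : ℝ)) ^ 2) := by
    refine Finset.sum_congr rfl fun a ha => ?_
    rw [pUpAt, hfiltA a ha, hcast]
  have halg : ∀ q r : ℝ,
      1 / ((l.card : ℝ) * (-(1 / (l.card : ℝ)) * (q / r))) = -(r / q) := by
    intro q r
    rw [show (l.card : ℝ) * (-(1 / (l.card : ℝ)) * (q / r)) = -(q / r) by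
      rw [neg_mul, mul_neg, ← mul_assoc, mul_one_div_cancel hn, one_mul]]
    rw [div_neg, one_div_div]
  have hRHS : (1 : ℝ) / ((l.card : ℝ) * pDown l μ)
      = -((∏ t ∈ (removableCells l).erase c, ((content c : ℝ) - (content t : ℝ))) /
          ∏ x ∈ addableCells l, ((content c : ℝ) - (content x : ℝ))) := by
    rw [pDown, pDownAt, hfiltR, hcast]
    exact halg _ _
  exact hLHS.trans (hkey.trans hRHS.symm)
end

section
/- Let λ ⋖ μ be Young diagrams with μ obtained from λ by adding a box of content c = c(μ/λ). Then the Cauchy transforms satisfy (z - c)²/((z - c - 1)(z - c + 1)) · G_λ(z) = G_μ(z) as rational functions in z. -/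
open Finset

open YG Finset

/-!
Write `N(d)` for the number of cells of content `d`; they are the first `N(d)` cells of that
diagonal. The neighbouring diagonals of contents `d ± 1`, the one farther from the main diagonal
counted with one extra cell (both when `d = 0`), have length `N(d)` or `N(d) + 1`. The next cell
of diagonal `d` is addable exactly when both are one longer, and its last cell is removable
exactly when neither is. Hence the indicator of the addable contents minus that of the removable
contents is the discrete Laplacian `N(d-1) + N(d+1) - 2N(d) + δ₀(d)`. Adding a box of content `c`
adds `δ_c` to `N`, so the multisets `x` of addable and `y` of removable contents satisfy
`y(μ) + x(λ) + {c - 1, c + 1} = y(λ) + x(μ) + {c, c}`; evaluating `∏ (z - ·)` on both sides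
gives the identity.
-/

namespace YG

/-- The cell of index `m` on the diagonal of content `d`; index `0` lies in row or column `0`. -/
def diagCell (d : ℤ) (m : ℕ) : ℕ × ℕ := ((-d).toNat + m, d.toNat + m)

lemma content_diagCell (d : ℤ) (m : ℕ) : content (diagCell d m) = d := by
  simp only [content, diagCell]; omega

lemma diagCell_content_min (p : ℕ × ℕ) : diagCell (content p) (min p.1 p.2) = p := by
  simp only [content, diagCell, Prod.ext_iff]; omega

lemma diagCell_succ (d : ℤ) (m : ℕ) :
    diagCell d (m + 1) = ((diagCell d m).1 + 1, (diagCell d m).2 + 1) := by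
  simp only [diagCell, Prod.ext_iff]; omega

lemma diagCell_injective (d : ℤ) : Function.Injective (diagCell d) := by
  intro m m' h
  simpa [diagCell] using congrArg Prod.fst h

lemma exists_diagCell_notMem (l : YoungDiagram) (d : ℤ) : ∃ m, diagCell d m ∉ l := by
  obtain ⟨m, hm⟩ :=
    Infinite.exists_notMem_finset (l.cells.preimage (diagCell d) (diagCell_injective d).injOn)
  exact ⟨m, by simpa using hm⟩

noncomputable def diagLen (l : YoungDiagram) (d : ℤ) : ℕ :=
  Nat.find (exists_diagCell_notMem l d)

lemma diagCell_mem_iff {l : YoungDiagram} {d : ℤ} {m : ℕ} :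
    diagCell d m ∈ l ↔ m < diagLen l d := by
  constructor
  · intro hm
    by_contra! hle
    exact Nat.find_spec (exists_diagCell_notMem l d)
      (l.up_left_mem (Nat.add_le_add_left hle _) (Nat.add_le_add_left hle _) hm)
  · intro hm
    simpa using Nat.find_min (exists_diagCell_notMem l d) hm

lemma diagLen_eq_card (l : YoungDiagram) (d : ℤ) :
    diagLen l d = #{p ∈ l.cells | content p = d} := by
  have : {p ∈ l.cells | content p = d} =
      (range (diagLen l d)).map ⟨_, diagCell_injective d⟩ := by
    ext p
    simp only [mem_filter, YoungDiagram.mem_cells, mem_map, mem_range, Function.Embedding.coeFn_mk]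
    constructor
    · rintro ⟨hp, rfl⟩
      rw [← diagCell_content_min p, diagCell_mem_iff] at hp
      exact ⟨_, hp, diagCell_content_min p⟩
    · rintro ⟨m, hm, rfl⟩
      exact ⟨diagCell_mem_iff.2 hm, content_diagCell d m⟩
  rw [this, card_map, card_range]

variable {l μ : YoungDiagram}

def LeftSupported (l : YoungDiagram) (p : ℕ × ℕ) : Prop := p.2 = 0 ∨ (p.1, p.2 - 1) ∈ l

def UpSupported (l : YoungDiagram) (p : ℕ × ℕ) : Prop := p.1 = 0 ∨ (p.1 - 1, p.2) ∈ l

lemma leftSupported_of_mem {p : ℕ × ℕ} (hp : p ∈ l) : LeftSupported l p :=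
  or_iff_not_imp_left.2 fun _ => l.up_left_mem le_rfl (Nat.sub_le _ _) hp

lemma upSupported_of_mem {p : ℕ × ℕ} (hp : p ∈ l) : UpSupported l p :=
  or_iff_not_imp_left.2 fun _ => l.up_left_mem (Nat.sub_le _ _) le_rfl hp

lemma mem_of_leftSupported_succ {i j : ℕ} (h : LeftSupported l (i + 1, j + 1)) : (i, j) ∈ l :=
  l.up_left_mem (Nat.le_succ i) le_rfl (h.resolve_left (Nat.succ_ne_zero j))

lemma mem_of_upSupported_succ {i j : ℕ} (h : UpSupported l (i + 1, j + 1)) : (i, j) ∈ l :=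
  l.up_left_mem le_rfl (Nat.le_succ j) (h.resolve_left (Nat.succ_ne_zero i))

/-- `diagCell d m` is left-supported iff `m < leftSupportLen l d`: for `d ≤ 0` the index shifts
by one between the diagonals `d` and `d - 1`, and the cell in column `0` is supported vacuously. -/
noncomputable def leftSupportLen (l : YoungDiagram) (d : ℤ) : ℕ :=
  diagLen l (d - 1) + if d ≤ 0 then 1 else 0

noncomputable def upSupportLen (l : YoungDiagram) (d : ℤ) : ℕ :=
  diagLen l (d + 1) + if 0 ≤ d then 1 else 0

lemma leftSupported_diagCell_iff {d : ℤ} {m : ℕ} :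
    LeftSupported l (diagCell d m) ↔ m < leftSupportLen l d := by
  unfold LeftSupported leftSupportLen
  rcases le_or_gt d 0 with hd | hd
  · rcases m with _ | k
    · simp [diagCell, hd]
    · rw [show ((diagCell d (k + 1)).1, (diagCell d (k + 1)).2 - 1) = diagCell (d - 1) k by
        simp only [diagCell, Prod.ext_iff]; omega, diagCell_mem_iff, if_pos hd]
      simp only [diagCell]; omega
  · rw [show ((diagCell d m).1, (diagCell d m).2 - 1) = diagCell (d - 1) m by
      simp only [diagCell, Prod.ext_iff]; omega, diagCell_mem_iff, if_neg hd.not_ge]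
    simp only [diagCell]; omega

lemma upSupported_diagCell_iff {d : ℤ} {m : ℕ} :
    UpSupported l (diagCell d m) ↔ m < upSupportLen l d := by
  unfold UpSupported upSupportLen
  rcases le_or_gt 0 d with hd | hd
  · rcases m with _ | k
    · simp [diagCell, hd]
    · rw [show ((diagCell d (k + 1)).1 - 1, (diagCell d (k + 1)).2) = diagCell (d + 1) k by
        simp only [diagCell, Prod.ext_iff]; omega, diagCell_mem_iff, if_pos hd]
      simp only [diagCell]; omega
  · rw [show ((diagCell d m).1 - 1, (diagCell d m).2) = diagCell (d + 1) m by
      simp only [diagCell, Prod.ext_iff]; omega, diagCell_mem_iff, if_neg hd.not_ge]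
    simp only [diagCell]; omega

lemma diagLen_le_and_le_succ_of_support {d : ℤ} {P : ℕ × ℕ → Prop}
    (hmem : ∀ p ∈ l, P p) (hsucc : ∀ i j, P (i + 1, j + 1) → (i, j) ∈ l) {K : ℕ}
    (hK : ∀ m, P (diagCell d m) ↔ m < K) :
    diagLen l d ≤ K ∧ K ≤ diagLen l d + 1 := by
  constructor
  · rcases Nat.eq_zero_or_pos (diagLen l d) with h0 | hpos
    · omega
    · have := (hK _).1 (hmem _ (diagCell_mem_iff.2 (Nat.sub_lt hpos one_pos)))
      omega
  · by_contra! hlt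
    have hsupp := (hK (diagLen l d + 1)).2 hlt
    rw [diagCell_succ] at hsupp
    exact (lt_irrefl _) (diagCell_mem_iff.1 (hsucc _ _ hsupp))

lemma diagLen_le_leftSupportLen_le_succ (d : ℤ) :
    diagLen l d ≤ leftSupportLen l d ∧ leftSupportLen l d ≤ diagLen l d + 1 :=
  diagLen_le_and_le_succ_of_support (fun _ => leftSupported_of_mem)
    (fun _ _ => mem_of_leftSupported_succ) fun _ => leftSupported_diagCell_iff

lemma diagLen_le_upSupportLen_le_succ (d : ℤ) :
    diagLen l d ≤ upSupportLen l d ∧ upSupportLen l d ≤ diagLen l d + 1 :=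
  diagLen_le_and_le_succ_of_support (fun _ => upSupported_of_mem)
    (fun _ _ => mem_of_upSupported_succ) fun _ => upSupported_diagCell_iff

lemma lt_card_of_mem {i j : ℕ} (h : (i, j) ∈ l) : i < l.card ∧ j < l.card := by
  have hcol : l.col j ⊆ l.cells := filter_subset _ _
  have hrow : l.row i ⊆ l.cells := filter_subset _ _
  exact ⟨(YoungDiagram.mem_iff_lt_colLen.1 h).trans_le (l.colLen_eq_card ▸ card_le_card hcol),
    (YoungDiagram.mem_iff_lt_rowLen.1 h).trans_le (l.rowLen_eq_card ▸ card_le_card hrow)⟩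

lemma mem_addableCells_iff {p : ℕ × ℕ} :
    p ∈ addableCells l ↔ p ∉ l ∧ UpSupported l p ∧ LeftSupported l p := by
  simp only [addableCells, mem_filter, mem_product, mem_range, UpSupported, LeftSupported,
    and_iff_right_iff_imp]
  rintro ⟨-, hup, hleft⟩
  constructor
  · rcases hup with h | h
    · omega
    · have := (lt_card_of_mem h).1; omega
  · rcases hleft with h | h
    · omega
    · have := (lt_card_of_mem h).2; omega

lemma mem_removableCells_iff {p : ℕ × ℕ} :
    p ∈ removableCells l ↔
      p ∈ l ∧ ¬UpSupported l (p.1 + 1, p.2 + 1) ∧ ¬LeftSupported l (p.1 + 1, p.2 + 1) := by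
  simp [removableCells, UpSupported, LeftSupported]

lemma diagCell_mem_addableCells_iff {d : ℤ} {m : ℕ} :
    diagCell d m ∈ addableCells l ↔
      diagLen l d ≤ m ∧ m < upSupportLen l d ∧ m < leftSupportLen l d := by
  rw [mem_addableCells_iff, diagCell_mem_iff, upSupported_diagCell_iff,
    leftSupported_diagCell_iff, not_lt]

lemma diagCell_mem_removableCells_iff {d : ℤ} {m : ℕ} :
    diagCell d m ∈ removableCells l ↔
      m < diagLen l d ∧ upSupportLen l d ≤ m + 1 ∧ leftSupportLen l d ≤ m + 1 := by
  rw [mem_removableCells_iff, ← diagCell_succ, diagCell_mem_iff, upSupported_diagCell_iff,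
    leftSupported_diagCell_iff, not_lt, not_lt]

lemma count_map_content_eq {s : Finset (ℕ × ℕ)} {d : ℤ} {m₀ : ℕ}
    (h : ∀ m, diagCell d m ∈ s → m = m₀) :
    (s.val.map content).count d = if diagCell d m₀ ∈ s then 1 else 0 := by
  rw [Multiset.count_map, ← filter_val, card_val]
  split_ifs with hm
  · rw [card_eq_one]
    refine ⟨diagCell d m₀,
      eq_singleton_iff_unique_mem.2 ⟨mem_filter.2 ⟨hm, (content_diagCell _ _).symm⟩, ?_⟩⟩
    rintro p hp
    obtain ⟨hps, rfl⟩ := mem_filter.1 hp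
    rw [← diagCell_content_min p] at hps
    rw [← h _ hps, diagCell_content_min]
  · rw [card_eq_zero, filter_eq_empty_iff]
    rintro p hps rfl
    rw [← diagCell_content_min p] at hps
    exact hm (h _ hps ▸ hps)

def addableContents (l : YoungDiagram) : Multiset ℤ := (addableCells l).val.map content

def removableContents (l : YoungDiagram) : Multiset ℤ := (removableCells l).val.map content

lemma count_addableContents (d : ℤ) :
    (addableContents l).count d =
      if diagLen l d < upSupportLen l d ∧ diagLen l d < leftSupportLen l d then 1 else 0 := by
  have := diagLen_le_upSupportLen_le_succ (l := l) d
  rw [addableContents, count_map_content_eq (m₀ := diagLen l d)]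
  · simp only [diagCell_mem_addableCells_iff, le_refl, true_and]
  · intro m hm
    rw [diagCell_mem_addableCells_iff] at hm
    omega

lemma count_removableContents (d : ℤ) :
    (removableContents l).count d =
      if 0 < diagLen l d ∧ upSupportLen l d ≤ diagLen l d ∧ leftSupportLen l d ≤ diagLen l d
      then 1 else 0 := by
  have := diagLen_le_upSupportLen_le_succ (l := l) d
  rw [removableContents, count_map_content_eq (m₀ := diagLen l d - 1)]
  · simp only [diagCell_mem_removableCells_iff]
    exact if_congr (by omega) rfl rfl
  · intro m hm
    rw [diagCell_mem_removableCells_iff] at hm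
    omega

lemma count_addableContents_sub_count_removableContents (d : ℤ) :
    ((addableContents l).count d : ℤ) - (removableContents l).count d =
      diagLen l (d - 1) + diagLen l (d + 1) - 2 * diagLen l d + if d = 0 then 1 else 0 := by
  have hup := diagLen_le_upSupportLen_le_succ (l := l) d
  have hleft := diagLen_le_leftSupportLen_le_succ (l := l) d
  rw [count_addableContents, count_removableContents]
  simp only [upSupportLen, leftSupportLen] at hup hleft ⊢
  split_ifs at hup hleft ⊢ <;> omega

lemma Covers.exists_cells_eq_insert (h : Covers l μ) :
    ∃ b ∉ l.cells, μ.cells = insert b l.cells := by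
  have hsub : l.cells ⊆ μ.cells := YoungDiagram.cells_subset_iff.2 h.1
  have hcard : #(μ.cells \ l.cells) = 1 := by
    rw [card_sdiff_of_subset hsub]
    exact Nat.sub_eq_of_eq_add' h.2
  obtain ⟨b, hb⟩ := card_eq_one.1 hcard
  refine ⟨b, fun hbl => ?_, ?_⟩
  · simpa [hbl] using hb.symm.subset (mem_singleton_self b)
  · rw [insert_eq, ← hb, sdiff_union_of_subset hsub]

section InsertCell

variable {b : ℕ × ℕ}

lemma addedContent_eq_of_cells_eq_insert (hb : b ∉ l.cells) (hμ : μ.cells = insert b l.cells) :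
    addedContent l μ = content b := by
  rw [addedContent, hμ, insert_sdiff_of_notMem _ hb, sdiff_self, bot_eq_empty, insert_empty,
    sum_singleton]

lemma diagLen_of_cells_eq_insert (hb : b ∉ l.cells) (hμ : μ.cells = insert b l.cells)
    (e : ℤ) :
    diagLen μ e = diagLen l e + if content b = e then 1 else 0 := by
  rw [diagLen_eq_card, diagLen_eq_card, hμ, filter_insert]
  split_ifs
  · rw [card_insert_of_notMem fun h => hb (mem_filter.1 h).1]
  · rfl

lemma contents_of_cells_eq_insert (hb : b ∉ l.cells) (hμ : μ.cells = insert b l.cells) :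
    removableContents μ + addableContents l + {content b - 1, content b + 1} =
      removableContents l + addableContents μ + {content b, content b} := by
  ext d
  have hl := count_addableContents_sub_count_removableContents (l := l) d
  have hμ' := count_addableContents_sub_count_removableContents (l := μ) d
  simp only [diagLen_of_cells_eq_insert hb hμ] at hμ'
  simp only [Multiset.count_add, Multiset.insert_eq_cons, Multiset.count_cons,
    Multiset.count_singleton]
  split_ifs at hμ' ⊢ <;> omega

end InsertCell

end YG

/-- Adding a box of content `c` to `λ` transforms the Cauchy transform
`G_λ(z) = ∏_j (z - y_j)/∏_j (z - x_j)` by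
`(z - c)²/((z - c - 1)(z - c + 1)) · G_λ(z) = G_μ(z)`, as rational functions. -/
theorem stmt6 (l μ : YoungDiagram) (h : Covers l μ) (z : ℝ)
    (hz1 : ∀ a ∈ addableCells l, z ≠ (content a : ℝ))
    (hz2 : ∀ a ∈ addableCells μ, z ≠ (content a : ℝ))
    (hz3 : z ≠ (addedContent l μ : ℝ) + 1) (hz4 : z ≠ (addedContent l μ : ℝ) - 1) :
    (z - (addedContent l μ : ℝ)) ^ 2 /
        ((z - (addedContent l μ : ℝ) - 1) * (z - (addedContent l μ : ℝ) + 1)) *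
        ((∏ r ∈ removableCells l, (z - (content r : ℝ))) /
          (∏ a ∈ addableCells l, (z - (content a : ℝ)))) =
      (∏ r ∈ removableCells μ, (z - (content r : ℝ))) /
        (∏ a ∈ addableCells μ, (z - (content a : ℝ))) := by
  obtain ⟨b, hb, hμ⟩ := h.exists_cells_eq_insert
  rw [addedContent_eq_of_cells_eq_insert hb hμ] at hz3 hz4 ⊢
  have hcontents := congrArg (fun M : Multiset ℤ => (M.map fun d : ℤ => z - d).prod)
    (contents_of_cells_eq_insert hb hμ)
  simp only [removableContents, addableContents, Multiset.map_add, Multiset.prod_add,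
    Multiset.map_map, Function.comp_def, ← prod_eq_multiset_prod, Multiset.insert_eq_cons,
    Multiset.map_cons, Multiset.map_singleton, Multiset.prod_cons, Multiset.prod_singleton,
    Int.cast_add, Int.cast_sub, Int.cast_one] at hcontents
  have hAl : ∏ a ∈ addableCells l, (z - content a) ≠ 0 :=
    prod_ne_zero_iff.2 fun a ha => sub_ne_zero.2 (hz1 a ha)
  have hAμ : ∏ a ∈ addableCells μ, (z - content a) ≠ 0 :=
    prod_ne_zero_iff.2 fun a ha => sub_ne_zero.2 (hz2 a ha)
  have hsub : z - content b - 1 ≠ 0 := fun h => hz3 (by linarith)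
  have hadd : z - content b + 1 ≠ 0 := fun h => hz4 (by linarith)
  field_simp
  linear_combination -hcontents
end

section
/- Suppose λ ⋖ μ ⋖ ν is a path of length 2 in the Young graph such that the contents satisfy c(ν/μ) - c(μ/λ) ≠ ±1. Then there exists a unique Young diagram μ' with μ' ≠ μ, λ ⋖ μ' ⋖ ν, ν/μ' = μ/λ and μ'/λ = ν/μ. Conversely, if c(ν/μ) - c(μ/λ) = ±1 then μ is the unique diagram with λ ⋖ μ ⋖ ν. -/
open Finset

/-!
Write `μ = λ ∪ {a}` and `ν = μ ∪ {b}`. An intermediate diagram `λ ⋖ μ' ⋖ ν` is `λ ∪ {a}` or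
`λ ∪ {b}`, and `λ ∪ {b}` is a lower set exactly when `a ≰ b`. Now `b ≰ a` because `b ∉ μ`.
If `a < b`, then `b` is a neighbour of `a`: a cell strictly between them would lie in `λ`, and
would drag `a` into `λ` with it. Two cells that are incomparable have contents differing by at
least `2`. Hence `a ≤ b` iff `c(b) - c(a) = ±1`.
-/

namespace YG

variable {l μ μ' ν : YoungDiagram} {a b : ℕ × ℕ}

theorem covers_iff_exists_insert : Covers l μ ↔ ∃ a ∉ l.cells, insert a l.cells = μ.cells := by
  rw [← Finset.covBy_iff_exists_insert, Finset.covBy_iff_card_sdiff_eq_one, Covers,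
    YoungDiagram.cells_subset_iff]
  refine and_congr_right fun hle => ?_
  rw [card_sdiff_of_subset (YoungDiagram.cells_subset_iff.2 hle)]
  unfold YoungDiagram.card
  omega

theorem addedContent_eq (ha : a ∉ l.cells) (hμ : insert a l.cells = μ.cells) :
    addedContent l μ = content a := by
  rw [addedContent, ← hμ, insert_sdiff_cancel ha, sum_singleton]

theorem content_sub_eq_one_or_of_covBy (h : a ⋖ b) :
    content b - content a = 1 ∨ content b - content a = -1 := by
  rcases Prod.covBy_iff.1 h with ⟨h₁, h₂⟩ | ⟨h₂, h₁⟩ <;>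
  · rw [Nat.covBy_iff_add_one_eq] at *
    simp only [content]
    omega

theorem le_or_le_of_content_sub_eq_one_or
    (h : content b - content a = 1 ∨ content b - content a = -1) : a ≤ b ∨ b ≤ a := by
  simp only [content, Prod.le_def] at *
  omega

theorem covBy_of_lt (ha : a ∉ l.cells) (hν : insert b (insert a l.cells) = ν.cells)
    (hab : a < b) : a ⋖ b := by
  by_contra hcov
  obtain ⟨c, hac, hcb⟩ := (not_covBy_iff hab).1 hcov
  have hcν : c ∈ ν.cells := ν.isLowerSet hcb.le (mem_coe.2 (hν ▸ mem_insert_self b _))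
  rw [← hν, mem_insert, mem_insert] at hcν
  rcases hcν with rfl | rfl | hcl
  · exact hcb.ne rfl
  · exact hac.ne rfl
  · exact ha (l.isLowerSet hac.le hcl)

theorem le_iff_content_sub_eq_one_or (ha : a ∉ l.cells) (hμ : insert a l.cells = μ.cells)
    (hb : b ∉ μ.cells) (hν : insert b μ.cells = ν.cells) :
    a ≤ b ↔ content b - content a = 1 ∨ content b - content a = -1 := by
  have haμ : a ∈ μ.cells := hμ ▸ mem_insert_self a _
  refine ⟨fun hab => ?_, fun h => (le_or_le_of_content_sub_eq_one_or h).resolve_right ?_⟩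
  · have hne : a ≠ b := by rintro rfl; exact hb haμ
    exact content_sub_eq_one_or_of_covBy (covBy_of_lt ha (hμ ▸ hν) (hab.lt_of_ne hne))
  · exact fun hba => hb (μ.isLowerSet hba haμ)

theorem cells_eq_of_covers_of_covers (hν : insert b (insert a l.cells) = ν.cells)
    (h₁ : Covers l μ') (h₂ : Covers μ' ν) :
    insert a l.cells = μ'.cells ∨ insert b l.cells = μ'.cells := by
  obtain ⟨c, hcl, hc⟩ := covers_iff_exists_insert.1 h₁
  have hcν : c ∈ ν.cells := YoungDiagram.cells_subset_iff.2 h₂.1 (hc ▸ mem_insert_self c _)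
  rw [← hν, mem_insert, mem_insert] at hcν
  rcases hcν with rfl | rfl | hcl'
  · exact Or.inr hc
  · exact Or.inl hc
  · exact absurd hcl' hcl

theorem eq_of_covers_of_covers_of_le (ha : a ∉ l.cells) (hμ : insert a l.cells = μ.cells)
    (hb : b ∉ μ.cells) (hν : insert b μ.cells = ν.cells) (hab : a ≤ b)
    (h₁ : Covers l μ') (h₂ : Covers μ' ν) : μ' = μ := by
  rcases cells_eq_of_covers_of_covers (hμ ▸ hν) h₁ h₂ with h | h
  · exact YoungDiagram.ext (h.symm.trans hμ)
  · have haμ' : a ∈ μ'.cells := μ'.isLowerSet hab (mem_coe.2 (h ▸ mem_insert_self b _))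
    rw [← h, mem_insert] at haμ'
    rcases haμ' with rfl | hal
    · exact absurd (hμ ▸ mem_insert_self a _) hb
    · exact absurd hal ha

theorem isLowerSet_insert_of_not_le (hν : insert b (insert a l.cells) = ν.cells)
    (hab : ¬a ≤ b) : IsLowerSet ((insert b l.cells : Finset (ℕ × ℕ)) : Set (ℕ × ℕ)) := by
  intro p q hqp hp
  simp only [coe_insert, Set.mem_insert_iff, mem_coe] at hp ⊢
  rcases hp with rfl | hp
  · have hqν : q ∈ ν.cells := ν.isLowerSet hqp (mem_coe.2 (hν ▸ mem_insert_self _ _))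
    rw [← hν, mem_insert, mem_insert] at hqν
    rcases hqν with rfl | rfl | hql
    · exact Or.inl rfl
    · exact absurd hqp hab
    · exact Or.inr hql
  · exact Or.inr (l.isLowerSet hqp hp)

theorem existsUnique_of_not_le (ha : a ∉ l.cells) (hμ : insert a l.cells = μ.cells)
    (hb : b ∉ μ.cells) (hν : insert b μ.cells = ν.cells) (hab : ¬a ≤ b) :
    ∃! μ' : YoungDiagram, μ' ≠ μ ∧ Covers l μ' ∧ Covers μ' ν ∧
      ν.cells \ μ'.cells = μ.cells \ l.cells ∧ μ'.cells \ l.cells = ν.cells \ μ.cells := by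
  have hν' : insert b (insert a l.cells) = ν.cells := hμ ▸ hν
  have hbl : b ∉ l.cells := fun h => hb (hμ ▸ mem_insert_of_mem h)
  have haμ' : a ∉ insert b l.cells := by
    rw [mem_insert, not_or]
    exact ⟨fun h => hab h.le, ha⟩
  let μ' : YoungDiagram := ⟨insert b l.cells, isLowerSet_insert_of_not_le hν' hab⟩
  have hμ'ν : insert a μ'.cells = ν.cells := by rw [← hν', insert_comm]
  refine ⟨μ', ⟨?_, covers_iff_exists_insert.2 ⟨b, hbl, rfl⟩,
    covers_iff_exists_insert.2 ⟨a, haμ', hμ'ν⟩, ?_, ?_⟩, ?_⟩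
  · intro h
    exact hb (h ▸ mem_insert_self b l.cells)
  · rw [← hμ'ν, ← hμ, insert_sdiff_cancel haμ', insert_sdiff_cancel ha]
  · rw [← hν, insert_sdiff_cancel hb]
    exact insert_sdiff_cancel hbl
  · rintro y ⟨hyμ, h₁, h₂, -⟩
    rcases cells_eq_of_covers_of_covers hν' h₁ h₂ with h | h
    · exact absurd (YoungDiagram.ext (h.symm.trans hμ)) hyμ
    · exact YoungDiagram.ext h.symm

end YG

open YG Finset

/-- Paths of length 2 in the Young graph: if `λ ⋖ μ ⋖ ν` with
`c(ν/μ) - c(μ/λ) ≠ ±1` then there is a unique Young diagram `μ' ≠ μ` with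
`λ ⋖ μ' ⋖ ν`, `ν/μ' = μ/λ` and `μ'/λ = ν/μ`; and if `c(ν/μ) - c(μ/λ) = ±1` then
`μ` is the unique intermediate diagram. -/
theorem stmt8 (l μ ν : YoungDiagram) (h1 : Covers l μ) (h2 : Covers μ ν) :
    ((addedContent μ ν - addedContent l μ ≠ 1 ∧ addedContent μ ν - addedContent l μ ≠ -1) →
      ∃! μ' : YoungDiagram, μ' ≠ μ ∧ Covers l μ' ∧ Covers μ' ν ∧
        ν.cells \ μ'.cells = μ.cells \ l.cells ∧ μ'.cells \ l.cells = ν.cells \ μ.cells) ∧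
    ((addedContent μ ν - addedContent l μ = 1 ∨ addedContent μ ν - addedContent l μ = -1) →
      ∀ μ'' : YoungDiagram, Covers l μ'' → Covers μ'' ν → μ'' = μ) := by
  obtain ⟨a, ha, hμ⟩ := covers_iff_exists_insert.1 h1
  obtain ⟨b, hb, hν⟩ := covers_iff_exists_insert.1 h2
  rw [addedContent_eq ha hμ, addedContent_eq hb hν, ← not_or,
    ← le_iff_content_sub_eq_one_or ha hμ hb hν]
  exact ⟨existsUnique_of_not_le ha hμ hb hν,
    fun hab _ => eq_of_covers_of_covers_of_le ha hμ hb hν hab⟩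
end

section
/- For a Young diagram μ and μ ⋖ λ, |μ| · ∑_{ν : ν ⋖ μ} p↓(μ,ν) / (c(λ/μ) - c(μ/ν)) = c(λ/μ), i.e., the evaluation of z - H_μ(z) at the content z = c(λ/μ) of the box added to μ equals c(λ/μ) - 0; equivalently H_μ(c(λ/μ)) = 0. -/
open Finset

open YG Finset

/-!
Write `x` for the content of the box `λ/μ`, `x_b` for the contents of the addable cells and `y_r`
for those of the removable cells. Cancelling the factor `y_r - x` of `p↓(μ, ·)` against the
denominator turns the claim into
`∑_r ∏_{b ≠ λ/μ} (y_r - x_b) / ∏_{r' ≠ r} (y_r - y_r') = x`.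
There is exactly one more addable than removable cell, so the left side is the Lagrange
interpolation formula for the `z^(n-1)` coefficient of `∏_{b ≠ λ/μ} (z - x_b) - ∏_r (z - y_r)`,
namely `∑_r y_r - ∑_{b ≠ λ/μ} x_b`; this equals `x` because `∑_b x_b = ∑_r y_r`, the two sums
telescoping along the rows of `μ`.
-/

open Polynomial Lagrange in
theorem sum_prod_sub_div_prod_erase_sub {F ι κ : Type*} [Field F] [DecidableEq ι]
    {s : Finset ι} {t : Finset κ} {v : ι → F} (w : κ → F) (hv : Set.InjOn v s)
    (hcard : #t = #s) :
    ∑ i ∈ s, (∏ k ∈ t, (v i - w k)) / ∏ j ∈ s.erase i, (v i - v j) =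
      ∑ i ∈ s, v i - ∑ k ∈ t, w k := by
  obtain rfl | hs := s.eq_empty_or_nonempty
  · obtain rfl : t = ∅ := card_eq_zero.mp hcard
    simp
  have hdeg : (nodal t w - nodal s v).degree < #s := by
    have := degree_sub_lt_left (p := nodal t w) (q := nodal s v)
      (by rw [degree_nodal, degree_nodal, hcard]) nodal_ne_zero
      (by rw [nodal_monic.leadingCoeff, nodal_monic.leadingCoeff])
    rwa [degree_nodal, hcard] at this
  calc ∑ i ∈ s, (∏ k ∈ t, (v i - w k)) / ∏ j ∈ s.erase i, (v i - v j)
      = ∑ i ∈ s, (nodal t w - nodal s v).eval (v i) / ∏ j ∈ s.erase i, (v i - v j) := by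
        refine sum_congr rfl fun i hi => ?_
        rw [eval_sub, eval_nodal, eval_nodal, prod_eq_zero hi (sub_self _), sub_zero]
    _ = (nodal t w - nodal s v).coeff (#s - 1) := (coeff_eq_sum hv hdeg).symm
    _ = ∑ i ∈ s, v i - ∑ k ∈ t, w k := by
        rw [coeff_sub, nodal_eq, nodal_eq, prod_X_sub_C_coeff_card_pred _ _ hs.card_pos, ← hcard,
          prod_X_sub_C_coeff_card_pred _ _ (hcard ▸ hs.card_pos), neg_sub_neg]

namespace YG

lemma content_mk (i j : ℕ) : content (i, j) = (j : ℤ) - i := rfl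

lemma rowLen_le_card_s16 (μ : YoungDiagram) (i : ℕ) : μ.rowLen i ≤ μ.card := by
  rw [μ.rowLen_eq_card]
  exact card_le_card (filter_subset _ _)

lemma colLen_le_card_s16 (μ : YoungDiagram) (j : ℕ) : μ.colLen j ≤ μ.card := by
  rw [μ.colLen_eq_card]
  exact card_le_card (filter_subset _ _)

lemma pos_rowLen_iff_lt_colLen {μ : YoungDiagram} {i : ℕ} : 0 < μ.rowLen i ↔ i < μ.colLen 0 := by
  rw [← YoungDiagram.mem_iff_lt_rowLen, YoungDiagram.mem_iff_lt_colLen]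

lemma mem_removableCells {μ : YoungDiagram} {i j : ℕ} :
    (i, j) ∈ removableCells μ ↔ j + 1 = μ.rowLen i ∧ μ.rowLen (i + 1) ≤ j := by
  simp only [removableCells, mem_filter, YoungDiagram.mem_cells, YoungDiagram.mem_iff_lt_rowLen]
  omega

lemma mem_addableCells {μ : YoungDiagram} {i j : ℕ} :
    (i, j) ∈ addableCells μ ↔ j = μ.rowLen i ∧ (i = 0 ∨ μ.rowLen i < μ.rowLen (i - 1)) := by
  have hj := rowLen_le_card_s16 μ i
  have hi : i = 0 ∨ μ.rowLen i < μ.rowLen (i - 1) → i ≤ μ.card := by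
    rintro (hi | hi)
    · omega
    · have := pos_rowLen_iff_lt_colLen.mp (Nat.zero_lt_of_lt hi)
      have := colLen_le_card_s16 μ 0
      omega
  simp only [addableCells, mem_filter, mem_product, mem_range,
    YoungDiagram.mem_iff_lt_rowLen]
  omega

def removableRows (μ : YoungDiagram) : Finset ℕ :=
  (range (μ.colLen 0)).filter fun i => μ.rowLen (i + 1) < μ.rowLen i

lemma mem_removableRows {μ : YoungDiagram} {i : ℕ} :
    i ∈ removableRows μ ↔ μ.rowLen (i + 1) < μ.rowLen i := by
  rw [removableRows, mem_filter, mem_range, ← pos_rowLen_iff_lt_colLen]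
  omega

lemma removableCells_eq_image (μ : YoungDiagram) :
    removableCells μ = (removableRows μ).image fun i => (i, μ.rowLen i - 1) := by
  ext ⟨i, j⟩
  simp only [mem_image, mem_removableCells, mem_removableRows, Prod.mk.injEq]
  constructor
  · rintro ⟨hj, hnext⟩
    exact ⟨i, by omega, rfl, by omega⟩
  · rintro ⟨i, hi, rfl, rfl⟩
    omega

lemma addableCells_eq_insert_image (μ : YoungDiagram) :
    addableCells μ = insert (0, μ.rowLen 0)
      ((removableRows μ).image fun i => (i + 1, μ.rowLen (i + 1))) := by
  ext ⟨i, j⟩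
  simp only [mem_insert, mem_image, mem_addableCells, mem_removableRows, Prod.mk.injEq]
  constructor
  · rintro ⟨rfl, rfl | hi⟩
    · exact Or.inl ⟨rfl, rfl⟩
    · cases i with
      | zero => exact absurd hi (lt_irrefl _)
      | succ i => exact Or.inr ⟨i, hi, rfl, rfl⟩
  · rintro (⟨rfl, rfl⟩ | ⟨i, hi, rfl, rfl⟩)
    · exact ⟨rfl, Or.inl rfl⟩
    · exact ⟨rfl, Or.inr hi⟩

lemma card_addableCells (μ : YoungDiagram) :
    #(addableCells μ) = #(removableCells μ) + 1 := by
  rw [addableCells_eq_insert_image, removableCells_eq_image, card_insert_of_notMem (by simp),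
    card_image_of_injective _ fun _ _ h => by simpa using (Prod.ext_iff.mp h).1,
    card_image_of_injective _ fun _ _ h => (Prod.ext_iff.mp h).1]

lemma sum_rowLen_sub_rowLen_succ (μ : YoungDiagram) :
    ∑ i ∈ removableRows μ, ((μ.rowLen i : ℤ) - μ.rowLen (i + 1)) = μ.rowLen 0 := by
  have hlast : μ.rowLen (μ.colLen 0) = 0 :=
    Nat.eq_zero_of_not_pos (mt pos_rowLen_iff_lt_colLen.mp (lt_irrefl _))
  have hstep : ∀ i ∈ range (μ.colLen 0), (μ.rowLen i : ℤ) - μ.rowLen (i + 1) ≠ 0 →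
      μ.rowLen (i + 1) < μ.rowLen i := fun i _ h => by
    have := μ.rowLen_anti i (i + 1) i.le_succ
    omega
  rw [removableRows, sum_filter_of_ne hstep, sum_range_sub', hlast, Nat.cast_zero, sub_zero]

lemma sum_content_addableCells (μ : YoungDiagram) :
    ∑ c ∈ addableCells μ, content c = ∑ c ∈ removableCells μ, content c := by
  rw [addableCells_eq_insert_image, removableCells_eq_image, sum_insert (by simp),
    sum_image fun _ _ _ _ h => by simpa using (Prod.ext_iff.mp h).1,
    sum_image fun _ _ _ _ h => (Prod.ext_iff.mp h).1]
  have hterm : ∀ i ∈ removableRows μ, content (i, μ.rowLen i - 1) =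
      content (i + 1, μ.rowLen (i + 1)) + ((μ.rowLen i : ℤ) - μ.rowLen (i + 1)) := by
    intro i hi
    have := mem_removableRows.mp hi
    simp only [content_mk]
    omega
  rw [sum_congr rfl hterm, sum_add_distrib, sum_rowLen_sub_rowLen_succ, content_mk]
  push_cast
  ring

lemma content_injOn_removableCells (μ : YoungDiagram) :
    Set.InjOn content (removableCells μ) := by
  rintro ⟨i, j⟩ hij ⟨i', j'⟩ hij' hc
  simp only [mem_coe, mem_removableCells, content_mk] at hij hij' hc
  rcases lt_trichotomy i i' with h | rfl | h
  · have := μ.rowLen_anti (i + 1) i' h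
    omega
  · simp only [Prod.mk.injEq, true_and]
    omega
  · have := μ.rowLen_anti (i' + 1) i h
    omega

lemma content_ne_of_mem_addableCells_of_mem_removableCells {μ : YoungDiagram} {a r : ℕ × ℕ}
    (ha : a ∈ addableCells μ) (hr : r ∈ removableCells μ) : content a ≠ content r := by
  obtain ⟨i, j⟩ := a
  obtain ⟨i', j'⟩ := r
  rw [mem_addableCells] at ha
  rw [mem_removableCells] at hr
  rw [content_mk, content_mk]
  rcases le_or_gt i i' with h | h
  · have := μ.rowLen_anti i i' h
    omega
  · have := μ.rowLen_anti (i' + 1) i h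
    omega

lemma mem_addableCells_of_notMem {μ : YoungDiagram} {c : ℕ × ℕ} (hc : c ∉ μ)
    (hbelow : ∀ d ≤ c, d ≠ c → d ∈ μ) : c ∈ addableCells μ := by
  obtain ⟨i, j⟩ := c
  rw [YoungDiagram.mem_iff_lt_rowLen, not_lt] at hc
  refine mem_addableCells.mpr ⟨?_, ?_⟩
  · by_contra hne
    have := hbelow (i, μ.rowLen i) (Prod.mk_le_mk.mpr ⟨le_rfl, hc⟩) (by simp only [ne_eq, Prod.mk.injEq]; omega)
    exact (YoungDiagram.mem_iff_lt_rowLen.mp this).ne rfl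
  · rcases Nat.eq_zero_or_pos i with hi | hi
    · exact Or.inl hi
    · have := hbelow (i - 1, j) (Prod.mk_le_mk.mpr ⟨Nat.sub_le _ _, le_rfl⟩) (by simp only [ne_eq, Prod.mk.injEq]; omega)
      rw [YoungDiagram.mem_iff_lt_rowLen] at this
      omega

lemma Covers.exists_mem_addableCells {μ l : YoungDiagram} (h : Covers μ l) :
    ∃ a ∈ addableCells μ, addedContent μ l = content a := by
  obtain ⟨hle, hcard⟩ := h
  obtain ⟨a, ha⟩ : ∃ a, l.cells \ μ.cells = {a} := by
    rw [← card_eq_one, card_sdiff_of_subset (YoungDiagram.cells_subset_iff.mpr hle)]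
    exact Nat.sub_eq_of_eq_add' hcard
  have hmem : ∀ c, c ∈ l.cells \ μ.cells ↔ c = a := by simp [ha]
  have ha' := (hmem a).mpr rfl
  simp only [mem_sdiff, YoungDiagram.mem_cells] at hmem ha'
  refine ⟨a, mem_addableCells_of_notMem ha'.2 fun d hd hne => ?_, by
    rw [addedContent, ha, sum_singleton]⟩
  by_contra hdμ
  exact hne ((hmem d).mp ⟨l.isLowerSet hd ha'.1, hdμ⟩)

lemma filter_content_ne_eq_erase {μ : YoungDiagram} {r : ℕ × ℕ} (hr : r ∈ removableCells μ) :
    (removableCells μ).filter (fun r' => content r' ≠ content r) = (removableCells μ).erase r := by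
  ext r'
  simp only [mem_filter, mem_erase]
  exact ⟨fun ⟨h, hne⟩ => ⟨fun he => hne (he ▸ rfl), h⟩,
    fun ⟨hne, h⟩ => ⟨h, fun he => hne (content_injOn_removableCells μ h hr he)⟩⟩

lemma card_mul_pDownAt_div_sub {μ : YoungDiagram} {a r : ℕ × ℕ} (ha : a ∈ addableCells μ)
    (hr : r ∈ removableCells μ) :
    (μ.card : ℝ) * (pDownAt μ (content r) / ((content a : ℝ) - content r)) =
      (∏ b ∈ (addableCells μ).erase a, ((content r : ℝ) - content b)) /
        ∏ r' ∈ (removableCells μ).erase r, ((content r : ℝ) - content r') := by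
  have hcard : (μ.card : ℝ) ≠ 0 :=
    Nat.cast_ne_zero.mpr (card_ne_zero_of_mem (mem_of_mem_filter r hr))
  have hsub : (content a : ℝ) - content r ≠ 0 :=
    sub_ne_zero.mpr (by exact_mod_cast content_ne_of_mem_addableCells_of_mem_removableCells ha hr)
  rw [pDownAt, filter_content_ne_eq_erase hr, ← mul_prod_erase _ _ ha]
  field_simp
  ring

end YG

-- The sum over the diagrams `ν ⋖ μ` is indexed by the removable cells of `μ`.
/-- Value of the right-turn (dot) element: for `μ ⋖ λ`,
`|μ| · ∑_{ν : ν ⋖ μ} p↓(μ,ν)/(c(λ/μ) - c(μ/ν)) = c(λ/μ)`, i.e.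
`H_μ(c(λ/μ)) = 0`. The sum over diagrams `ν` covered by `μ` is written as a sum
over the removable cells of `μ`. -/
theorem stmt16 (μ l : YoungDiagram) (h : Covers μ l) :
    (μ.card : ℝ) *
        ∑ r ∈ removableCells μ,
          pDownAt μ (content r) / ((addedContent μ l : ℝ) - (content r : ℝ)) =
      (addedContent μ l : ℝ) := by
  obtain ⟨a, ha, hx⟩ := h.exists_mem_addableCells
  have hinj : Set.InjOn (fun r => (content r : ℝ)) (removableCells μ) := fun r hr r' hr' he =>
    content_injOn_removableCells μ hr hr' (Int.cast_injective he)
  have hcard : #((addableCells μ).erase a) = #(removableCells μ) := by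
    rw [card_erase_of_mem ha, card_addableCells, Nat.add_sub_cancel]
  have hsum : ∑ c ∈ addableCells μ, (content c : ℝ) = ∑ c ∈ removableCells μ, (content c : ℝ) := by
    exact_mod_cast sum_content_addableCells μ
  rw [hx, mul_sum, sum_congr rfl fun r hr => card_mul_pDownAt_div_sub ha hr,
    sum_prod_sub_div_prod_erase_sub _ hinj hcard, sum_erase_eq_sub ha, hsum]
  ring
end

section
/- (Cyclic antisymmetry of the character integrand) Let H be any rational function and n ≥ 1. Define F(z_1,...,z_n) = ∏_{i=1}^{n-1} 1/(z_i - z_{i+1}) · ∏_{1≤i<j≤n} (z_i - z_j)²/((z_i - z_j - 1)(z_i - z_j + 1)) · ∏_{i=1}^{n} H(z_i). Then ∑_{p=1}^{n} F(z_p, z_{p+1}, ..., z_n, z_1, ..., z_{p-1}) = 0 for n ≥ 2, and F(z_n, z_{n-1}, ..., z_1) = (-1)^{n-1} F(z_1, ..., z_n). -/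
open Finset

private lemma modR (c a n : ℕ) : (c + a % n) % n = (c + a) % n := by
  conv_rhs => rw [← Nat.mod_add_div a n, ← Nat.add_assoc]
  rw [Nat.add_mul_mod_self_left]

private lemma modL (a c n : ℕ) : (a % n + c) % n = (a + c) % n := by
  rw [Nat.add_comm (a % n) c, modR, Nat.add_comm c a]

private lemma modmod (a n : ℕ) : a % n % n = a % n :=
  Nat.mod_mod_of_dvd a dvd_rfl

private lemma inv_aux (p n : ℕ) (hn : 0 < n) :
    ∀ i < n, ((p + i) % n + (n - p % n)) % n = i := by
  intro i hi
  rw [modL]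
  have h1 := Nat.mod_add_div p n
  have h2 : p % n < n := Nat.mod_lt _ hn
  have h3 : p + i + (n - p % n) = (i + n) + n * (p / n) := by
    generalize n * (p / n) = A at h1 ⊢; omega
  rw [h3, Nat.add_mul_mod_self_left, Nat.add_mod_right, Nat.mod_eq_of_lt hi]

private lemma inv_aux2 (p n : ℕ) (hn : 0 < n) :
    ∀ i < n, (p + (i + (n - p % n)) % n) % n = i := by
  intro i hi
  rw [modR]
  have h1 := Nat.mod_add_div p n
  have h2 : p % n < n := Nat.mod_lt _ hn
  have h3 : p + (i + (n - p % n)) = (i + n) + n * (p / n) := by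
    generalize n * (p / n) = A at h1 ⊢; omega
  rw [h3, Nat.add_mul_mod_self_left, Nat.add_mod_right, Nat.mod_eq_of_lt hi]

private lemma ne_shift (p n : ℕ) (hn : 2 ≤ n) : (p + (n - 1)) % n ≠ p % n := by
  rw [← modL]
  have hb : p % n < n := Nat.mod_lt _ (by omega)
  rcases Nat.eq_zero_or_pos (p % n) with h | h
  · rw [h, Nat.zero_add, Nat.mod_eq_of_lt (by omega)]; omega
  · rw [show p % n + (n - 1) = (p % n - 1) + n by omega, Nat.add_mod_right,
      Nat.mod_eq_of_lt (by omega)]; omega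

private lemma cycle_one_prod {M : Type*} [CommMonoid M] (F : ℕ → M) (n : ℕ) :
    ∏ i ∈ range n, F ((1 + i) % n) = ∏ i ∈ range n, F i := by
  cases n with
  | zero => simp
  | succ m =>
    rw [Finset.prod_range_succ, Finset.prod_range_succ']
    congr 1
    · refine Finset.prod_congr rfl fun i hi => ?_
      rw [Nat.mod_eq_of_lt (by simp only [mem_range] at hi; omega), Nat.add_comm]
    · rw [Nat.add_comm, Nat.mod_self]

private lemma cycle_one_sum (F : ℕ → ℝ) (n : ℕ) :
    ∑ i ∈ range n, F ((1 + i) % n) = ∑ i ∈ range n, F i := by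
  cases n with
  | zero => simp
  | succ m =>
    rw [Finset.sum_range_succ, Finset.sum_range_succ']
    congr 1
    · refine Finset.sum_congr rfl fun i hi => ?_
      rw [Nat.mod_eq_of_lt (by simp only [mem_range] at hi; omega), Nat.add_comm]
    · rw [Nat.add_comm, Nat.mod_self]

private lemma rot_prod {M : Type*} [CommMonoid M] (f : ℕ → M) (n k : ℕ) :
    ∏ i ∈ range n, f ((k + i) % n) = ∏ i ∈ range n, f (i % n) := by
  induction k with
  | zero => simp
  | succ k ih =>
    calc ∏ i ∈ range n, f ((k + 1 + i) % n)
        = ∏ i ∈ range n, (fun j => f ((k + j) % n)) ((1 + i) % n) := by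
          refine Finset.prod_congr rfl fun i _ => ?_
          show f ((k + 1 + i) % n) = f ((k + (1 + i) % n) % n)
          rw [modR, ← Nat.add_assoc]
      _ = ∏ i ∈ range n, f ((k + i) % n) := cycle_one_prod (fun j => f ((k + j) % n)) n
      _ = _ := ih

private lemma rot_sum (f : ℕ → ℝ) (n k : ℕ) :
    ∑ i ∈ range n, f ((k + i) % n) = ∑ i ∈ range n, f (i % n) := by
  induction k with
  | zero => simp
  | succ k ih =>
    calc ∑ i ∈ range n, f ((k + 1 + i) % n)
        = ∑ i ∈ range n, (fun j => f ((k + j) % n)) ((1 + i) % n) := by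
          refine Finset.sum_congr rfl fun i _ => ?_
          show f ((k + 1 + i) % n) = f ((k + (1 + i) % n) % n)
          rw [modR, ← Nat.add_assoc]
      _ = ∑ i ∈ range n, f ((k + i) % n) := cycle_one_sum (fun j => f ((k + j) % n)) n
      _ = _ := ih

private lemma prod_perm (h : ℕ → ℝ) (n : ℕ) (σ τ : ℕ → ℕ)
    (hσ : ∀ i < n, σ i < n) (hτ : ∀ i < n, τ i < n)
    (hτσ : ∀ i < n, τ (σ i) = i) (hστ : ∀ i < n, σ (τ i) = i) :
    ∏ i ∈ range n, h (σ i) = ∏ i ∈ range n, h i := by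
  refine Finset.prod_nbij' σ τ ?_ ?_ ?_ ?_ ?_
  · intro a ha; simp only [mem_range] at *; exact hσ a ha
  · intro a ha; simp only [mem_range] at *; exact hτ a ha
  · intro a ha; simp only [mem_range] at ha; exact hτσ a ha
  · intro a ha; simp only [mem_range] at ha; exact hστ a ha
  · intro a _; rfl

private lemma prod_pairs (G : ℕ → ℕ → ℝ) (hG : ∀ a b, G a b = G b a) (n : ℕ)
    (σ τ : ℕ → ℕ)
    (hσ : ∀ i < n, σ i < n) (hτ : ∀ i < n, τ i < n)
    (hτσ : ∀ i < n, τ (σ i) = i) (hστ : ∀ i < n, σ (τ i) = i) :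
    ∏ i ∈ range n, ∏ j ∈ Finset.Ico (i + 1) n, G (σ i) (σ j)
      = ∏ i ∈ range n, ∏ j ∈ Finset.Ico (i + 1) n, G i j := by
  rw [Finset.prod_sigma' (range n) (fun i => Finset.Ico (i + 1) n)
      (fun i j => G (σ i) (σ j)),
    Finset.prod_sigma' (range n) (fun i => Finset.Ico (i + 1) n) (fun i j => G i j)]
  refine Finset.prod_nbij'
    (fun x => if σ x.1 < σ x.2 then ⟨σ x.1, σ x.2⟩ else ⟨σ x.2, σ x.1⟩)
    (fun y => if τ y.1 < τ y.2 then ⟨τ y.1, τ y.2⟩ else ⟨τ y.2, τ y.1⟩)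
    ?_ ?_ ?_ ?_ ?_
  · rintro ⟨a1, a2⟩ ha
    simp only [Finset.mem_sigma, mem_range, Finset.mem_Ico] at ha
    obtain ⟨h1, h12, h2⟩ := ha
    have hne : σ a1 ≠ σ a2 := by
      intro hcon
      have h := hτσ a1 h1
      rw [hcon, hτσ a2 h2] at h
      omega
    dsimp only
    by_cases hlt : σ a1 < σ a2
    · rw [if_pos hlt]
      simp only [Finset.mem_sigma, mem_range, Finset.mem_Ico]
      exact ⟨hσ a1 h1, by omega, hσ a2 h2⟩
    · rw [if_neg hlt]
      simp only [Finset.mem_sigma, mem_range, Finset.mem_Ico]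
      exact ⟨hσ a2 h2, by have := hσ a1 h1; omega, hσ a1 h1⟩
  · rintro ⟨a1, a2⟩ ha
    simp only [Finset.mem_sigma, mem_range, Finset.mem_Ico] at ha
    obtain ⟨h1, h12, h2⟩ := ha
    have hne : τ a1 ≠ τ a2 := by
      intro hcon
      have h := hστ a1 h1
      rw [hcon, hστ a2 h2] at h
      omega
    dsimp only
    by_cases hlt : τ a1 < τ a2
    · rw [if_pos hlt]
      simp only [Finset.mem_sigma, mem_range, Finset.mem_Ico]
      exact ⟨hτ a1 h1, by omega, hτ a2 h2⟩
    · rw [if_neg hlt]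
      simp only [Finset.mem_sigma, mem_range, Finset.mem_Ico]
      exact ⟨hτ a2 h2, by have := hτ a1 h1; omega, hτ a1 h1⟩
  · rintro ⟨a1, a2⟩ ha
    simp only [Finset.mem_sigma, mem_range, Finset.mem_Ico] at ha
    obtain ⟨h1, h12, h2⟩ := ha
    have h12' : a1 < a2 := by omega
    dsimp only
    by_cases hlt : σ a1 < σ a2
    · rw [if_pos hlt]
      dsimp only
      rw [hτσ a1 h1, hτσ a2 h2, if_pos h12']
    · rw [if_neg hlt]
      dsimp only
      rw [hτσ a1 h1, hτσ a2 h2, if_neg (by omega)]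
  · rintro ⟨a1, a2⟩ ha
    simp only [Finset.mem_sigma, mem_range, Finset.mem_Ico] at ha
    obtain ⟨h1, h12, h2⟩ := ha
    have h12' : a1 < a2 := by omega
    dsimp only
    by_cases hlt : τ a1 < τ a2
    · rw [if_pos hlt]
      dsimp only
      rw [hστ a1 h1, hστ a2 h2, if_pos h12']
    · rw [if_neg hlt]
      dsimp only
      rw [hστ a1 h1, hστ a2 h2, if_neg (by omega)]
  · rintro ⟨a1, a2⟩ _
    dsimp only
    by_cases hlt : σ a1 < σ a2
    · rw [if_pos hlt]
    · rw [if_neg hlt]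
      exact hG _ _

private lemma g_symm (z : ℕ → ℝ) (a b : ℕ) :
    (z a - z b) ^ 2 / ((z a - z b - 1) * (z a - z b + 1))
      = (z b - z a) ^ 2 / ((z b - z a - 1) * (z b - z a + 1)) := by
  have h1 : (z a - z b) ^ 2 = (z b - z a) ^ 2 := by ring
  have h2 : (z a - z b - 1) * (z a - z b + 1)
      = (z b - z a - 1) * (z b - z a + 1) := by ring
  rw [h1, h2]


/-- The character integrand
`F(z_1,…,z_n) = ∏_{i<n} 1/(z_i - z_{i+1}) · ∏_{i<j} (z_i-z_j)²/((z_i-z_j-1)(z_i-z_j+1))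
  · ∏_i H(z_i)` (0-based indices). -/
noncomputable def charF (H : ℝ → ℝ) (n : ℕ) (z : ℕ → ℝ) : ℝ :=
  (∏ i ∈ Finset.range (n - 1), 1 / (z i - z (i + 1))) *
    (∏ i ∈ Finset.range n, ∏ j ∈ Finset.Ico (i + 1) n,
      (z i - z j) ^ 2 / ((z i - z j - 1) * (z i - z j + 1))) *
    ∏ i ∈ Finset.range n, H (z i)

/-- Cyclic antisymmetry of the character integrand: the sum of `F` over all cyclic
shifts of its arguments vanishes (for `n ≥ 2`), and reversing the arguments
multiplies `F` by `(-1)^{n-1}` (for `n ≥ 1`); valid whenever all denominators are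
nonzero. -/
theorem stmt18 (H : ℝ → ℝ) (n : ℕ) (z : ℕ → ℝ)
    (hz : ∀ i < n, ∀ j < n, i ≠ j →
      z i ≠ z j ∧ z i - z j ≠ 1 ∧ z i - z j ≠ -1) :
    (2 ≤ n → ∑ p ∈ Finset.range n, charF H n (fun i => z ((p + i) % n)) = 0) ∧
    (1 ≤ n → charF H n (fun i => z (n - 1 - i)) = (-1 : ℝ) ^ (n - 1) * charF H n z) := by
  constructor
  · intro hn
    obtain ⟨m, rfl⟩ : ∃ m, n = m + 1 := ⟨n - 1, by omega⟩
    have hn0 : 0 < m + 1 := by omega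
    have key : ∀ p ∈ range (m + 1), charF H (m + 1) (fun i => z ((p + i) % (m + 1)))
        = (z ((p + m) % (m + 1)) - z (p % (m + 1))) *
          ((∏ i ∈ range (m + 1), 1 / (z (i % (m + 1)) - z ((i + 1) % (m + 1)))) *
           (∏ i ∈ range (m + 1), ∏ j ∈ Finset.Ico (i + 1) (m + 1),
             (z i - z j) ^ 2 / ((z i - z j - 1) * (z i - z j + 1))) *
           (∏ i ∈ range (m + 1), H (z i))) := by
      intro p _
      have hσ : ∀ i < m + 1, (p + i) % (m + 1) < m + 1 := fun i _ => Nat.mod_lt _ hn0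
      have hτ : ∀ i < m + 1, (i + ((m + 1) - p % (m + 1))) % (m + 1) < m + 1 :=
        fun i _ => Nat.mod_lt _ hn0
      have hτσ := inv_aux p (m + 1) hn0
      have hστ := inv_aux2 p (m + 1) hn0
      have hC : (∏ i ∈ range (m + 1), H (z ((p + i) % (m + 1))))
          = ∏ i ∈ range (m + 1), H (z i) :=
        prod_perm (fun a => H (z a)) (m + 1) (fun i => (p + i) % (m + 1))
          (fun i => (i + ((m + 1) - p % (m + 1))) % (m + 1)) hσ hτ hτσ hστ
      have hB : (∏ i ∈ range (m + 1), ∏ j ∈ Finset.Ico (i + 1) (m + 1),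
            (z ((p + i) % (m + 1)) - z ((p + j) % (m + 1))) ^ 2 /
              ((z ((p + i) % (m + 1)) - z ((p + j) % (m + 1)) - 1) *
               (z ((p + i) % (m + 1)) - z ((p + j) % (m + 1)) + 1)))
          = ∏ i ∈ range (m + 1), ∏ j ∈ Finset.Ico (i + 1) (m + 1),
            (z i - z j) ^ 2 / ((z i - z j - 1) * (z i - z j + 1)) :=
        prod_pairs (fun a b => (z a - z b) ^ 2 / ((z a - z b - 1) * (z a - z b + 1)))
          (g_symm z) (m + 1) (fun i => (p + i) % (m + 1))
          (fun i => (i + ((m + 1) - p % (m + 1))) % (m + 1)) hσ hτ hτσ hστ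
      have hD : (∏ i ∈ range (m + 1), 1 / (z ((p + i) % (m + 1)) - z ((p + i + 1) % (m + 1))))
          = ∏ i ∈ range (m + 1), 1 / (z (i % (m + 1)) - z ((i + 1) % (m + 1))) := by
        calc (∏ i ∈ range (m + 1), 1 / (z ((p + i) % (m + 1)) - z ((p + i + 1) % (m + 1))))
            = ∏ i ∈ range (m + 1),
                (fun i => 1 / (z (i % (m + 1)) - z ((i + 1) % (m + 1)))) ((p + i) % (m + 1)) := by
              refine Finset.prod_congr rfl fun i _ => ?_
              show _ = 1 / (z ((p + i) % (m + 1) % (m + 1)) - z (((p + i) % (m + 1) + 1) % (m + 1)))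
              rw [modmod, modL]
          _ = ∏ i ∈ range (m + 1),
                (fun i => 1 / (z (i % (m + 1)) - z ((i + 1) % (m + 1)))) (i % (m + 1)) :=
              rot_prod (fun i => 1 / (z (i % (m + 1)) - z ((i + 1) % (m + 1)))) (m + 1) p
          _ = ∏ i ∈ range (m + 1), 1 / (z (i % (m + 1)) - z ((i + 1) % (m + 1))) := by
              refine Finset.prod_congr rfl fun i _ => ?_
              show 1 / (z (i % (m + 1) % (m + 1)) - z ((i % (m + 1) + 1) % (m + 1))) = _
              rw [modmod, modL]
      have hXne : z ((p + m) % (m + 1)) - z (p % (m + 1)) ≠ 0 := by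
        have hne : (p + m) % (m + 1) ≠ p % (m + 1) := ne_shift p (m + 1) hn
        have h1 : (p + m) % (m + 1) < m + 1 := Nat.mod_lt _ hn0
        have h2 : p % (m + 1) < m + 1 := Nat.mod_lt _ hn0
        exact sub_ne_zero.mpr (hz _ h1 _ h2 hne).1
      have hlast : (p + m + 1) % (m + 1) = p % (m + 1) := by
        rw [Nat.add_assoc]; exact Nat.add_mod_right p (m + 1)
      have hA : (∏ i ∈ range m, 1 / (z ((p + i) % (m + 1)) - z ((p + i + 1) % (m + 1))))
          = (∏ i ∈ range (m + 1), 1 / (z (i % (m + 1)) - z ((i + 1) % (m + 1)))) *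
            (z ((p + m) % (m + 1)) - z (p % (m + 1))) := by
        rw [← hD, Finset.prod_range_succ, hlast, mul_assoc, one_div,
          inv_mul_cancel₀ hXne, mul_one]
      have hstep : (∏ i ∈ range m, 1 / (z ((p + i) % (m + 1)) - z ((p + (i + 1)) % (m + 1))))
          = ∏ i ∈ range m, 1 / (z ((p + i) % (m + 1)) - z ((p + i + 1) % (m + 1))) :=
        Finset.prod_congr rfl fun i _ => by rw [Nat.add_assoc]
      simp only [charF, Nat.add_sub_cancel]
      rw [hstep, hA, hB, hC]
      ring
    rw [Finset.sum_congr rfl key, ← Finset.sum_mul]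
    have hsum : ∑ p ∈ range (m + 1), (z ((p + m) % (m + 1)) - z (p % (m + 1))) = 0 := by
      rw [Finset.sum_sub_distrib]
      have h1 : ∑ p ∈ range (m + 1), z ((p + m) % (m + 1))
          = ∑ p ∈ range (m + 1), z (p % (m + 1)) := by
        calc ∑ p ∈ range (m + 1), z ((p + m) % (m + 1))
            = ∑ p ∈ range (m + 1), (fun i => z (i % (m + 1))) ((m + p) % (m + 1)) := by
              refine Finset.sum_congr rfl fun p _ => ?_
              show z ((p + m) % (m + 1)) = z ((m + p) % (m + 1) % (m + 1))
              rw [modmod, Nat.add_comm m p]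
          _ = ∑ p ∈ range (m + 1), (fun i => z (i % (m + 1))) (p % (m + 1)) :=
              rot_sum (fun i => z (i % (m + 1))) (m + 1) m
          _ = ∑ p ∈ range (m + 1), z (p % (m + 1)) := by
              refine Finset.sum_congr rfl fun p _ => ?_
              show z (p % (m + 1) % (m + 1)) = _
              rw [modmod]
      rw [h1, sub_self]
    rw [hsum, zero_mul]
  · intro hn
    obtain ⟨m, rfl⟩ : ∃ m, n = m + 1 := ⟨n - 1, by omega⟩
    have hσ : ∀ i < m + 1, m - i < m + 1 := fun i _ => by omega
    have hinv : ∀ i < m + 1, m - (m - i) = i := fun i hi => by omega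
    have hC : (∏ i ∈ range (m + 1), H (z (m - i))) = ∏ i ∈ range (m + 1), H (z i) := by
      have h := Finset.prod_range_reflect (fun i => H (z i)) (m + 1)
      simpa using h
    have hB : (∏ i ∈ range (m + 1), ∏ j ∈ Finset.Ico (i + 1) (m + 1),
          (z (m - i) - z (m - j)) ^ 2 /
            ((z (m - i) - z (m - j) - 1) * (z (m - i) - z (m - j) + 1)))
        = ∏ i ∈ range (m + 1), ∏ j ∈ Finset.Ico (i + 1) (m + 1),
          (z i - z j) ^ 2 / ((z i - z j - 1) * (z i - z j + 1)) :=
      prod_pairs (fun a b => (z a - z b) ^ 2 / ((z a - z b - 1) * (z a - z b + 1)))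
        (g_symm z) (m + 1) (fun i => m - i) (fun i => m - i) hσ hσ hinv hinv
    have hA : (∏ i ∈ range m, 1 / (z (m - i) - z (m - (i + 1))))
        = (-1 : ℝ) ^ m * ∏ i ∈ range m, 1 / (z i - z (i + 1)) := by
      have h1 : ∀ i ∈ range m, 1 / (z (m - i) - z (m - (i + 1)))
          = (-1 : ℝ) * (fun j => 1 / (z j - z (j + 1))) (m - 1 - i) := by
        intro i hi
        simp only [mem_range] at hi
        have e1 : m - (i + 1) = m - 1 - i := by omega
        have e2 : m - 1 - i + 1 = m - i := by omega
        show 1 / (z (m - i) - z (m - (i + 1)))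
            = (-1 : ℝ) * (1 / (z (m - 1 - i) - z (m - 1 - i + 1)))
        rw [e1, e2, show z (m - i) - z (m - 1 - i) = -(z (m - 1 - i) - z (m - i)) by ring,
          div_neg]
        ring
      rw [Finset.prod_congr rfl h1, Finset.prod_mul_distrib, Finset.prod_const,
        Finset.card_range, Finset.prod_range_reflect (fun j => 1 / (z j - z (j + 1))) m]
    simp only [charF, Nat.add_sub_cancel]
    rw [hA, hB, hC]
    ring
end
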